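/- arXiv:2411.01256 — 4 statements merged into one kernel-verified Lean document; each statement's English description precedes it below -/
import Mathlib

section
/- Let $\alpha>-2$ and let $U_{1,\alpha}(x)=\frac{(3+\alpha)^{1/(4+2\alpha)}}{(1+|x|^{2+\alpha})^{1/(2+\alpha)}}$ for $x\in\mathbb{R}^3$. Then $\int_{\mathbb{R}^3}|\nabla U_{1,\alpha}|^2\,dx \;=\; \int_{\mathbb{R}^3}|x|^{\alpha}\,U_{1,\alpha}^{\,6+2\alpha}\,dx \;=\; S_\alpha^{\frac{3+\alpha}{2+\alpha}}.$ -/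
open MeasureTheory Real

/-- `ℝ³` as a Euclidean space. -/
abbrev E3 := EuclideanSpace ℝ (Fin 3)

/-- The best constant `S_α` in the weighted (Hardy/Hénon–)Sobolev inequality on `ℝ³`. -/
noncomputable def Sconst (a : ℝ) : ℝ :=
  (3 + a) * ((4 * Real.pi / (2 + a)) *
    (Real.Gamma ((3 + a) / (2 + a))) ^ 2 / Real.Gamma (2 * (3 + a) / (2 + a))) ^ ((2 + a) / (3 + a))

/-!
Both integrands are radial, so polar coordinates reduce them to one-dimensional integrals
`∫₀^∞ r^(pu-1) (1 + r^p)^(-(u+v)) dr = Γ(u) Γ(v) / (p Γ(u+v))` with `p = 2 + α`; the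
substitutions `t = r^p` and `x = t / (1 + t)` turn these into Euler's Beta integral. The two
integrals agree because the normalising constant `c = (3+α)^(1/(4+2α))` of `U_{1,α}` satisfies
`c^(4+2α) = 3 + α`.
-/

open Set

theorem integral_Ioo_rpow_mul_one_sub_rpow {u v : ℝ} (hu : 0 < u) (hv : 0 < v) :
    ∫ x in Ioo (0 : ℝ) 1, x ^ (u - 1) * (1 - x) ^ (v - 1) =
      Gamma u * Gamma v / Gamma (u + v) := by
  have h := Complex.betaIntegral_eq_Gamma_mul_div u v (by simpa) (by simpa)
  rw [Complex.betaIntegral, intervalIntegral.integral_of_le zero_le_one,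
    integral_Ioc_eq_integral_Ioo] at h
  have hreal :
      ∫ x in Ioo (0 : ℝ) 1, (x : ℂ) ^ ((u : ℂ) - 1) * (1 - (x : ℂ)) ^ ((v : ℂ) - 1) =
      ((∫ x in Ioo (0 : ℝ) 1, x ^ (u - 1) * (1 - x) ^ (v - 1) : ℝ) : ℂ) := by
    rw [← integral_complex_ofReal]
    refine setIntegral_congr_fun measurableSet_Ioo fun x hx => ?_
    push_cast [Complex.ofReal_cpow hx.1.le, Complex.ofReal_cpow (sub_nonneg.2 hx.2.le)]
    rfl
  rw [hreal, ← Complex.ofReal_add, Complex.Gamma_ofReal, Complex.Gamma_ofReal,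
    Complex.Gamma_ofReal] at h
  exact_mod_cast h

theorem image_div_one_add_Ioi : (fun t : ℝ => t / (1 + t)) '' Ioi 0 = Ioo 0 1 := by
  ext x
  constructor
  · rintro ⟨t, ht : 0 < t, rfl⟩
    exact ⟨by positivity, (div_lt_one (by positivity)).2 (by linarith)⟩
  · rintro ⟨hx0, hx1⟩
    refine ⟨x / (1 - x), div_pos hx0 (by linarith), ?_⟩
    field_simp
    ring

theorem integral_Ioi_rpow_mul_one_add_rpow_neg {u v : ℝ} (hu : 0 < u) (hv : 0 < v) :
    ∫ t in Ioi (0 : ℝ), t ^ (u - 1) * (1 + t) ^ (-(u + v)) =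
      Gamma u * Gamma v / Gamma (u + v) := by
  have hderiv : ∀ t ∈ Ioi (0 : ℝ),
      HasDerivWithinAt (fun t : ℝ => t / (1 + t)) (((1 + t) ^ 2)⁻¹) (Ioi 0) t := by
    intro t (ht : 0 < t)
    have h := (hasDerivAt_id t).div ((hasDerivAt_id t).const_add 1) (by positivity)
    refine h.hasDerivWithinAt.congr_deriv ?_
    simp only [id]
    field_simp
    ring
  have hinj : InjOn (fun t : ℝ => t / (1 + t)) (Ioi 0) := by
    intro s (hs : 0 < s) t (ht : 0 < t) h
    field_simp at h
    linarith
  rw [← integral_Ioo_rpow_mul_one_sub_rpow hu hv, ← image_div_one_add_Ioi,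
    integral_image_eq_integral_abs_deriv_smul measurableSet_Ioi hderiv hinj]
  refine setIntegral_congr_fun measurableSet_Ioi fun t (ht : 0 < t) => ?_
  have h1t : 0 < 1 + t := by positivity
  rw [smul_eq_mul, abs_of_pos (by positivity), one_sub_div h1t.ne', add_sub_cancel_right,
    div_rpow ht.le h1t.le, div_rpow zero_le_one h1t.le, one_rpow, ← rpow_natCast,
    ← rpow_neg h1t.le, div_eq_mul_inv, one_div, ← rpow_neg h1t.le, ← rpow_neg h1t.le]
  have hsplit : (1 + t) ^ (-(u + v)) =
      (1 + t) ^ (-((2 : ℕ) : ℝ)) * (1 + t) ^ (-(u - 1)) * (1 + t) ^ (-(v - 1)) := by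
    rw [← rpow_add h1t, ← rpow_add h1t]
    push_cast
    ring_nf
  rw [hsplit]
  ring

theorem integral_Ioi_rpow_mul_one_add_rpow_rpow_neg {p u v : ℝ} (hp : 0 < p) (hu : 0 < u)
    (hv : 0 < v) :
    ∫ r in Ioi (0 : ℝ), r ^ (p * u - 1) * (1 + r ^ p) ^ (-(u + v)) =
      Gamma u * Gamma v / (p * Gamma (u + v)) := by
  have h := integral_comp_rpow_Ioi_of_pos hp
    (g := fun t => p⁻¹ * (t ^ (u - 1) * (1 + t) ^ (-(u + v))))
  rw [integral_const_mul, integral_Ioi_rpow_mul_one_add_rpow_neg hu hv] at h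
  rw [show Gamma u * Gamma v / (p * Gamma (u + v)) = p⁻¹ * (Gamma u * Gamma v / Gamma (u + v))
    by ring, ← h]
  refine setIntegral_congr_fun measurableSet_Ioi fun r (hr : 0 < r) => ?_
  rw [smul_eq_mul, ← rpow_mul hr.le, mul_sub, mul_one]
  have hexp : r ^ (p * u - 1) = r ^ (p - 1) * r ^ (p * u - p) := by
    rw [← rpow_add hr]
    ring_nf
  rw [hexp]
  field_simp

theorem integral_fun_norm_euclideanSpace_fin_three (f : ℝ → ℝ) :
    ∫ x : EuclideanSpace ℝ (Fin 3), f ‖x‖ =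
      4 * π * ∫ r in Ioi (0 : ℝ), r ^ 2 * f r := by
  rw [integral_fun_norm_addHaar, finrank_euclideanSpace_fin, measureReal_def,
    EuclideanSpace.volume_ball_fin_three, ENNReal.ofReal_one, one_pow, one_mul,
    ENNReal.toReal_ofReal (by positivity)]
  simp only [nsmul_eq_mul, smul_eq_mul]
  push_cast
  ring

theorem integral_norm_rpow_mul_one_add_norm_rpow_neg {p u v : ℝ} (hp : 0 < p) (hu : 0 < u)
    (hv : 0 < v) :
    ∫ x : EuclideanSpace ℝ (Fin 3), ‖x‖ ^ (p * u - 3) * (1 + ‖x‖ ^ p) ^ (-(u + v)) =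
      4 * π * (Gamma u * Gamma v / (p * Gamma (u + v))) := by
  rw [integral_fun_norm_euclideanSpace_fin_three
      (fun r => r ^ (p * u - 3) * (1 + r ^ p) ^ (-(u + v))),
    ← integral_Ioi_rpow_mul_one_add_rpow_rpow_neg hp hu hv]
  congr 1
  refine setIntegral_congr_fun measurableSet_Ioi fun r (hr : 0 < r) => ?_
  rw [← mul_assoc, ← rpow_natCast, ← rpow_add hr]
  congr 2
  push_cast
  ring

theorem norm_fderiv_comp_norm {E : Type*} [NormedAddCommGroup E] [InnerProductSpace ℝ E]
    {φ : ℝ → ℝ} {φ' : ℝ} {x : E} (hx : x ≠ 0) (hφ : HasDerivAt φ φ' ‖x‖) :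
    ‖fderiv ℝ (fun y => φ ‖y‖) x‖ = |φ'| := by
  have : Nontrivial E := ⟨⟨x, 0, hx⟩⟩
  have hnorm : DifferentiableAt ℝ (‖·‖) x :=
    (contDiffAt_norm ℝ hx).differentiableAt one_ne_zero
  have h : HasFDerivAt (fun y => φ ‖y‖) (φ' • fderiv ℝ (‖·‖) x) x :=
    hφ.comp_hasFDerivAt x hnorm.hasFDerivAt
  rw [h.fderiv, norm_smul, norm_fderiv_norm hnorm, mul_one, norm_eq_abs]

theorem hasDerivAt_one_add_rpow_rpow_neg_inv {p r : ℝ} (hp : p ≠ 0) (hr : 0 < r) :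
    HasDerivAt (fun r => (1 + r ^ p) ^ (-p⁻¹))
      (-(r ^ (p - 1) * (1 + r ^ p) ^ (-p⁻¹ - 1))) r := by
  have h := ((hasDerivAt_rpow_const (p := p) (Or.inl hr.ne')).const_add 1).rpow_const
    (p := -p⁻¹) (Or.inl (by positivity))
  convert h using 1
  field_simp

noncomputable def bubble {E : Type*} [NormedAddCommGroup E] (p c : ℝ) (x : E) : ℝ :=
  c / (1 + ‖x‖ ^ p) ^ (1 / p)

theorem norm_fderiv_bubble_sq {E : Type*} [NormedAddCommGroup E] [InnerProductSpace ℝ E]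
    {p : ℝ} (hp : p ≠ 0) (c : ℝ) {x : E} (hx : x ≠ 0) :
    ‖fderiv ℝ (bubble p c) x‖ ^ 2 =
      c ^ 2 * (‖x‖ ^ ((p - 1) * 2) * (1 + ‖x‖ ^ p) ^ ((-p⁻¹ - 1) * 2)) := by
  have hr : 0 < ‖x‖ := norm_pos_iff.2 hx
  have hbubble : bubble p c = fun y : E => c * (1 + ‖y‖ ^ p) ^ (-p⁻¹) :=
    funext fun y => by rw [bubble, rpow_neg (by positivity), one_div, div_eq_mul_inv]
  rw [hbubble, norm_fderiv_comp_norm hx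
    ((hasDerivAt_one_add_rpow_rpow_neg_inv hp hr).const_mul c), sq_abs]
  have h2 : ((2 : ℕ) : ℝ) = 2 := by norm_num
  rw [← h2, rpow_mul_natCast hr.le, rpow_mul_natCast (by positivity)]
  ring

theorem integral_norm_fderiv_bubble_sq {a : ℝ} (ha : -2 < a) (c : ℝ) :
    ∫ x : E3, ‖fderiv ℝ (bubble (2 + a) c) x‖ ^ 2 =
      c ^ 2 * (3 + a) * (4 * π / (2 + a) *
        Gamma ((3 + a) / (2 + a)) ^ 2 / Gamma (2 * (3 + a) / (2 + a))) := by
  have hp : 0 < 2 + a := by linarith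
  have hs : 0 < (3 + a) / (2 + a) := div_pos (by linarith) hp
  have hae : (fun x : E3 => ‖fderiv ℝ (bubble (2 + a) c) x‖ ^ 2)
      =ᵐ[volume] fun x => c ^ 2 * (‖x‖ ^ ((2 + a) * ((3 + a) / (2 + a) + 1) - 3) *
        (1 + ‖x‖ ^ (2 + a)) ^ (-((3 + a) / (2 + a) + 1 + 1 / (2 + a)))) := by
    filter_upwards [measure_singleton (0 : E3) |> compl_mem_ae_iff.2] with x hx
    rw [norm_fderiv_bubble_sq hp.ne' c hx]
    congr 4 <;> field_simp <;> ring
  rw [integral_congr_ae hae, integral_const_mul,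
    integral_norm_rpow_mul_one_add_norm_rpow_neg hp (by positivity) (one_div_pos.2 hp)]
  have h2s : (3 + a) / (2 + a) + 1 + 1 / (2 + a) = 2 * (3 + a) / (2 + a) := by
    field_simp; ring
  have hs1 : (3 + a) / (2 + a) = 1 / (2 + a) + 1 := by field_simp; ring
  rw [h2s, Gamma_add_one hs.ne', hs1, Gamma_add_one (one_div_pos.2 hp).ne']
  field_simp
  ring

theorem integral_norm_rpow_mul_bubble_rpow {a : ℝ} (ha : -2 < a) {c : ℝ} (hc : 0 ≤ c) :
    ∫ x : E3, ‖x‖ ^ a * bubble (2 + a) c x ^ (6 + 2 * a) =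
      c ^ (6 + 2 * a) * (4 * π / (2 + a) *
        Gamma ((3 + a) / (2 + a)) ^ 2 / Gamma (2 * (3 + a) / (2 + a))) := by
  have hp : 0 < 2 + a := by linarith
  have hs : 0 < (3 + a) / (2 + a) := div_pos (by linarith) hp
  have hpt : ∀ x : E3, ‖x‖ ^ a * bubble (2 + a) c x ^ (6 + 2 * a) =
      c ^ (6 + 2 * a) * (‖x‖ ^ ((2 + a) * ((3 + a) / (2 + a)) - 3) *
        (1 + ‖x‖ ^ (2 + a)) ^ (-((3 + a) / (2 + a) + (3 + a) / (2 + a)))) := by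
    intro x
    have hX : 0 ≤ 1 + ‖x‖ ^ (2 + a) := by positivity
    rw [bubble, div_rpow hc (rpow_nonneg hX _), ← rpow_mul hX, div_eq_mul_inv, ← rpow_neg hX]
    have e1 : (2 + a) * ((3 + a) / (2 + a)) - 3 = a := by field_simp; ring
    have e2 : -((3 + a) / (2 + a) + (3 + a) / (2 + a)) = -(1 / (2 + a) * (6 + 2 * a)) := by
      field_simp; ring
    rw [e1, e2]
    ring
  rw [integral_congr_ae (Filter.Eventually.of_forall hpt), integral_const_mul,
    integral_norm_rpow_mul_one_add_norm_rpow_neg hp hs hs,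
    show (3 + a) / (2 + a) + (3 + a) / (2 + a) = 2 * (3 + a) / (2 + a) by ring]
  field_simp

theorem Sconst_rpow {a : ℝ} (ha : -2 < a) :
    Sconst a ^ ((3 + a) / (2 + a)) = (3 + a) ^ ((3 + a) / (2 + a)) * (4 * π / (2 + a) *
        Gamma ((3 + a) / (2 + a)) ^ 2 / Gamma (2 * (3 + a) / (2 + a))) := by
  have hp : 0 < 2 + a := by linarith
  have hK : 0 < 4 * π / (2 + a) * Gamma ((3 + a) / (2 + a)) ^ 2 /
      Gamma (2 * (3 + a) / (2 + a)) := by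
    have hΓ := Gamma_pos_of_pos (div_pos (by linarith : (0 : ℝ) < 3 + a) hp)
    have hΓ2 := Gamma_pos_of_pos (div_pos (by linarith : (0 : ℝ) < 2 * (3 + a)) hp)
    exact div_pos (mul_pos (div_pos (by positivity) hp) (pow_pos hΓ 2)) hΓ2
  rw [Sconst, mul_rpow (by linarith) (rpow_nonneg hK.le _), ← rpow_mul hK.le,
    div_mul_div_cancel₀ (by linarith), div_self (by linarith), rpow_one]

/-- For `U_{1,α}(x) = (3+α)^{1/(4+2α)} / (1+|x|^{2+α})^{1/(2+α)}` one has
`∫ |∇U|² = ∫ |x|^α U^{6+2α} = S_α^{(3+α)/(2+α)}`. -/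
theorem stmt1 (a : ℝ) (ha : -2 < a) (U : E3 → ℝ)
    (hU : ∀ x : E3, U x = (3 + a) ^ (1 / (4 + 2 * a)) / (1 + ‖x‖ ^ (2 + a)) ^ (1 / (2 + a))) :
    (∫ x : E3, ‖fderiv ℝ U x‖ ^ 2) = Sconst a ^ ((3 + a) / (2 + a)) ∧
    (∫ x : E3, ‖x‖ ^ a * U x ^ (6 + 2 * a)) = Sconst a ^ ((3 + a) / (2 + a)) := by
  have hp : 0 < 2 + a := by linarith
  have h3 : 0 < 3 + a := by linarith
  have h4 : 0 < 4 + 2 * a := by linarith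
  set c := (3 + a) ^ (1 / (4 + 2 * a)) with hc
  have hc2 : c ^ 2 * (3 + a) = (3 + a) ^ ((3 + a) / (2 + a)) := by
    rw [hc, ← rpow_natCast, ← rpow_mul h3.le, ← rpow_add_one h3.ne']
    congr 1
    field_simp
    ring
  have hc6 : c ^ (6 + 2 * a) = (3 + a) ^ ((3 + a) / (2 + a)) := by
    rw [hc, ← rpow_mul h3.le]
    congr 1
    field_simp
    ring
  obtain rfl : U = bubble (2 + a) c := funext hU
  rw [integral_norm_fderiv_bubble_sq ha, integral_norm_rpow_mul_bubble_rpow ha (by positivity),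
    Sconst_rpow ha, hc2, hc6]
  exact ⟨rfl, rfl⟩
end

section
/- Let $\alpha>-2$ and $\epsilon>0$, and let $U_{\epsilon,\alpha}(x)=\frac{(3+\alpha)^{1/(4+2\alpha)}\,\epsilon^{1/2}}{(\epsilon^{2+\alpha}+|x|^{2+\alpha})^{1/(2+\alpha)}}$ for $x\in\mathbb{R}^3$. Then $U_{\epsilon,\alpha}$ is positive, twice continuously differentiable on $\mathbb{R}^3\setminus\{0\}$, and satisfies pointwise, for every $x\in\mathbb{R}^3\setminus\{0\}$, $-\Delta U_{\epsilon,\alpha}(x) \;=\; |x|^{\alpha}\, U_{\epsilon,\alpha}(x)^{5+2\alpha},$ where $\Delta$ denotes the Laplacian on $\mathbb{R}^3$ (the sum of the second partial derivatives). -/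
open MeasureTheory Real

/-- The Laplacian on `ℝ³`: the sum of the second partial derivatives in the coordinate
directions. -/
noncomputable def lap (u : E3 → ℝ) (x : E3) : ℝ :=
  ∑ i : Fin 3,
    fderiv ℝ (fun y => fderiv ℝ u y (EuclideanSpace.single i (1 : ℝ))) x
      (EuclideanSpace.single i (1 : ℝ))

/-!
Writing `p = 2 + α` and `s = |x|²`, the bubble is `U(x) = φ(s)` with
`φ(s) = K (ε^p + s^{p/2})^{-1/p}`, which is smooth wherever `s > 0`. For a function of `|x|²`
on `ℝ³` one has `Δ (φ ∘ |·|²) = 6 φ'(s) + 4 s φ''(s)`, and a direct computation gives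
`-(6 φ' + 4 s φ'') = K (p + 1) ε^p s^{p/2-1} (ε^p + s^{p/2})^{-1/p-2}`. Since
`K^{2p} = (p + 1) ε^p`, the right-hand side is `s^{(p-2)/2} φ(s)^{2p+1} = |x|^α U(x)^{5+2α}`.
-/

open Filter Topology InnerProductSpace RealInnerProductSpace

theorem sq_rpow_div_two {r : ℝ} (hr : 0 ≤ r) (c : ℝ) : (r ^ 2) ^ (c / 2) = r ^ c := by
  rw [← rpow_natCast, ← rpow_mul hr, Nat.cast_ofNat, mul_div_cancel₀ c two_ne_zero]

section RadialFunction

variable {F : Type*} [NormedAddCommGroup F] [InnerProductSpace ℝ F] {f f' : ℝ → ℝ} {f'' : ℝ}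

theorem HasDerivAt.hasFDerivAt_comp_norm_sq {c : ℝ} {y : F} (hf : HasDerivAt f c (‖y‖ ^ 2)) :
    HasFDerivAt (fun z : F => f (‖z‖ ^ 2)) (c • (2 • innerSL ℝ y)) y :=
  hf.comp_hasFDerivAt y (hasStrictFDerivAt_norm_sq y).hasFDerivAt

theorem fderiv_fderiv_comp_norm_sq_apply {x v : F}
    (hf : ∀ᶠ t in 𝓝 (‖x‖ ^ 2), HasDerivAt f (f' t) t) (hf' : HasDerivAt f' f'' (‖x‖ ^ 2)) :
    fderiv ℝ (fun y => fderiv ℝ (fun z => f (‖z‖ ^ 2)) y v) x v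
      = 2 * f' (‖x‖ ^ 2) * ‖v‖ ^ 2 + 4 * f'' * ⟪x, v⟫ ^ 2 := by
  have hnear : ∀ᶠ y in 𝓝 x, HasDerivAt f (f' (‖y‖ ^ 2)) (‖y‖ ^ 2) :=
    ((continuous_norm.pow 2).tendsto x).eventually hf
  have hfirst : (fun y => fderiv ℝ (fun z => f (‖z‖ ^ 2)) y v)
      =ᶠ[𝓝 x] fun y => f' (‖y‖ ^ 2) * (2 * ⟪v, y⟫) := by
    filter_upwards [hnear] with y hy
    rw [hy.hasFDerivAt_comp_norm_sq.fderiv]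
    simp [real_inner_comm]
  have hsecond : HasFDerivAt (fun y : F => f' (‖y‖ ^ 2) * (2 * ⟪v, y⟫))
      (f' (‖x‖ ^ 2) • (2 : ℝ) • innerSL ℝ v + (2 * ⟪v, x⟫) • (f'' • (2 • innerSL ℝ x))) x :=
    hf'.hasFDerivAt_comp_norm_sq.mul (((innerSL ℝ v).hasFDerivAt).const_mul 2)
  rw [hfirst.fderiv_eq, hsecond.fderiv]
  simp only [add_apply, smul_apply, coe_innerSL_apply,
    real_inner_self_eq_norm_sq, real_inner_comm x v, smul_eq_mul, nsmul_eq_mul, Nat.cast_ofNat]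
  ring

theorem lap_comp_norm_sq {x : E3}
    (hf : ∀ᶠ t in 𝓝 (‖x‖ ^ 2), HasDerivAt f (f' t) t) (hf' : HasDerivAt f' f'' (‖x‖ ^ 2)) :
    lap (fun z => f (‖z‖ ^ 2)) x = 6 * f' (‖x‖ ^ 2) + 4 * ‖x‖ ^ 2 * f'' := by
  have hnorm : ‖x‖ ^ 2 = x 0 ^ 2 + x 1 ^ 2 + x 2 ^ 2 := by
    simp [EuclideanSpace.norm_sq_eq, Fin.sum_univ_three]
  simp only [lap, Fin.sum_univ_three, fderiv_fderiv_comp_norm_sq_apply hf hf', PiLp.norm_single,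
    norm_one, EuclideanSpace.inner_single_right, conj_trivial, one_mul]
  rw [hnorm]
  ring

end RadialFunction

section BubbleProfile

variable (K p ε : ℝ)

/-- The bubble as a function of `s = ‖x‖ ^ 2`, with `p = 2 + α`. -/
noncomputable def bubbleProfile (s : ℝ) : ℝ := K * (ε ^ p + s ^ (p / 2)) ^ (-(1 / p))

noncomputable def bubbleProfileDeriv (s : ℝ) : ℝ :=
  -(K / 2) * s ^ (p / 2 - 1) * (ε ^ p + s ^ (p / 2)) ^ (-(1 / p) - 1)

noncomputable def bubbleProfileDeriv2 (s : ℝ) : ℝ :=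
  -(K / 2) * ((p / 2 - 1) * s ^ (p / 2 - 2) * (ε ^ p + s ^ (p / 2)) ^ (-(1 / p) - 1)
    + s ^ (p / 2 - 1) * ((-(1 / p) - 1) * (ε ^ p + s ^ (p / 2)) ^ (-(1 / p) - 2)
      * (p / 2 * s ^ (p / 2 - 1))))

variable {K p ε} {s : ℝ}

theorem bubbleProfile_sq (hε : 0 ≤ ε) {r : ℝ} (hr : 0 ≤ r) :
    bubbleProfile K p ε (r ^ 2) = K / (ε ^ p + r ^ p) ^ (1 / p) := by
  have hw : 0 ≤ ε ^ p + r ^ p := by positivity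
  rw [bubbleProfile, sq_rpow_div_two hr, rpow_neg hw, ← div_eq_mul_inv]

theorem add_rpow_half_pos (hε : 0 ≤ ε) (hs : 0 < s) : 0 < ε ^ p + s ^ (p / 2) :=
  add_pos_of_nonneg_of_pos (rpow_nonneg hε p) (rpow_pos_of_pos hs _)

theorem hasDerivAt_add_rpow_half (hs : 0 < s) :
    HasDerivAt (fun t : ℝ => ε ^ p + t ^ (p / 2)) (p / 2 * s ^ (p / 2 - 1)) s :=
  (hasDerivAt_rpow_const (Or.inl hs.ne')).const_add _

theorem contDiffAt_bubbleProfile {n : WithTop ℕ∞} (hε : 0 ≤ ε) (hs : 0 < s) :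
    ContDiffAt ℝ n (bubbleProfile K p ε) s :=
  contDiffAt_const.mul <| (contDiffAt_rpow_const_of_ne (add_rpow_half_pos hε hs).ne').comp s <|
    contDiffAt_const.add (contDiffAt_rpow_const_of_ne hs.ne')

theorem hasDerivAt_bubbleProfile (hp : p ≠ 0) (hε : 0 ≤ ε) (hs : 0 < s) :
    HasDerivAt (bubbleProfile K p ε) (bubbleProfileDeriv K p ε s) s := by
  refine (((hasDerivAt_add_rpow_half hs).rpow_const
    (Or.inl (add_rpow_half_pos hε hs).ne')).const_mul K).congr_deriv ?_
  rw [bubbleProfileDeriv]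
  field_simp

theorem hasDerivAt_bubbleProfileDeriv (hε : 0 ≤ ε) (hs : 0 < s) :
    HasDerivAt (bubbleProfileDeriv K p ε) (bubbleProfileDeriv2 K p ε s) s := by
  have hpow : HasDerivAt (fun t : ℝ => t ^ (p / 2 - 1)) ((p / 2 - 1) * s ^ (p / 2 - 2)) s := by
    convert hasDerivAt_rpow_const (p := p / 2 - 1) (Or.inl hs.ne') using 3
    ring
  have hw := (hasDerivAt_add_rpow_half (p := p) (ε := ε) hs).rpow_const (p := -(1 / p) - 1)
    (Or.inl (add_rpow_half_pos hε hs).ne')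
  rw [show bubbleProfileDeriv K p ε = _ from funext fun t => (mul_assoc _ _ _)]
  refine ((hpow.mul hw).const_mul _).congr_deriv ?_
  rw [bubbleProfileDeriv2]
  ring_nf

theorem bubbleProfile_ode (hp : p ≠ 0) (hε : 0 ≤ ε) (hK : 0 < K)
    (hKp : K ^ (2 * p) = (p + 1) * ε ^ p) (hs : 0 < s) :
    -(6 * bubbleProfileDeriv K p ε s + 4 * s * bubbleProfileDeriv2 K p ε s)
      = s ^ (p / 2 - 1) * bubbleProfile K p ε s ^ (2 * p + 1) := by
  have hw : 0 < ε ^ p + s ^ (p / 2) := add_rpow_half_pos hε hs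
  have hs_succ (c : ℝ) : s ^ (c + 1) = s * s ^ c := by rw [rpow_add hs, rpow_one, mul_comm]
  have hs1 : s ^ (p / 2 - 1) = s * s ^ (p / 2 - 2) := by
    rw [← hs_succ]; ring_nf
  have hs2 : s ^ (p / 2) = s * (s * s ^ (p / 2 - 2)) := by
    rw [← hs1, ← hs_succ]; ring_nf
  have hw1 : (ε ^ p + s ^ (p / 2)) ^ (-(1 / p) - 1)
      = (ε ^ p + s ^ (p / 2)) * (ε ^ p + s ^ (p / 2)) ^ (-(1 / p) - 2) := by
    rw [show -(1 / p) - 1 = 1 + (-(1 / p) - 2) by ring, rpow_add hw, rpow_one]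
  have hprofile : bubbleProfile K p ε s ^ (2 * p + 1)
      = K * ((p + 1) * ε ^ p) * (ε ^ p + s ^ (p / 2)) ^ (-(1 / p) - 2) := by
    rw [bubbleProfile, mul_rpow hK.le (rpow_nonneg hw.le _), ← rpow_mul hw.le, rpow_add hK,
      rpow_one, hKp, show -(1 / p) * (2 * p + 1) = -(1 / p) - 2 by field_simp; ring]
    ring
  simp only [bubbleProfileDeriv, bubbleProfileDeriv2, hprofile, hw1, hs1]
  -- with `t = s^{p/2-2}` and `w = ε^p + s²t` everything is rational in `s, t, w, K, p`
  rw [hs2]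
  generalize s ^ (p / 2 - 2) = t
  generalize hw_def : ε ^ p + s * (s * t) = w
  rw [show ε ^ p = w - s * (s * t) by linarith]
  field_simp
  ring

end BubbleProfile

theorem neg_lap_bubbleProfile_comp_norm_sq {K p ε : ℝ} (hp : p ≠ 0) (hε : 0 ≤ ε) (hK : 0 < K)
    (hKp : K ^ (2 * p) = (p + 1) * ε ^ p) {x : E3} (hx : x ≠ 0) :
    -lap (fun y => bubbleProfile K p ε (‖y‖ ^ 2)) x
      = ‖x‖ ^ (p - 2) * bubbleProfile K p ε (‖x‖ ^ 2) ^ (2 * p + 1) := by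
  have hs : 0 < ‖x‖ ^ 2 := by positivity
  have hderiv : ∀ᶠ t in 𝓝 (‖x‖ ^ 2),
      HasDerivAt (bubbleProfile K p ε) (bubbleProfileDeriv K p ε t) t :=
    (lt_mem_nhds hs).mono fun t ht => hasDerivAt_bubbleProfile hp hε ht
  rw [lap_comp_norm_sq hderiv (hasDerivAt_bubbleProfileDeriv hε hs),
    bubbleProfile_ode hp hε hK hKp hs, show p / 2 - 1 = (p - 2) / 2 by ring,
    sq_rpow_div_two (norm_nonneg x)]

/-- `U_{ε,α}` is positive, `C²` away from the origin, and solves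
`-Δ U = |x|^α U^{5+2α}` pointwise on `ℝ³ \ {0}`. -/
theorem stmt3 (a ε : ℝ) (ha : -2 < a) (hε : 0 < ε) (U : E3 → ℝ)
    (hU : ∀ x : E3, U x = (3 + a) ^ (1 / (4 + 2 * a)) * ε ^ ((1 : ℝ) / 2) /
      (ε ^ (2 + a) + ‖x‖ ^ (2 + a)) ^ (1 / (2 + a))) :
    (∀ x : E3, 0 < U x) ∧ ContDiffOn ℝ 2 U {(0 : E3)}ᶜ ∧
    ∀ x : E3, x ≠ 0 → -lap U x = ‖x‖ ^ a * U x ^ (5 + 2 * a) := by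
  set K := (3 + a) ^ (1 / (4 + 2 * a)) * ε ^ ((1 : ℝ) / 2)
  have hp : 2 + a ≠ 0 := by linarith
  have h3 : 0 < 3 + a := by linarith
  have h4 : 4 + 2 * a ≠ 0 := by linarith
  have hK : 0 < K := by positivity
  have hKp : K ^ (2 * (2 + a)) = (2 + a + 1) * ε ^ (2 + a) := by
    rw [mul_rpow (by positivity) (by positivity), ← rpow_mul h3.le, ← rpow_mul hε.le,
      show 1 / (4 + 2 * a) * (2 * (2 + a)) = 1 by field_simp; ring, rpow_one,
      show 1 / 2 * (2 * (2 + a)) = 2 + a by ring]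
    ring
  have hU_eq : U = fun y => bubbleProfile K (2 + a) ε (‖y‖ ^ 2) :=
    funext fun y => by rw [hU, bubbleProfile_sq hε.le (norm_nonneg y)]
  refine ⟨fun x => ?_, fun x hx => ?_, fun x hx => ?_⟩
  · rw [hU x]
    positivity
  · rw [hU_eq]
    exact ((contDiffAt_bubbleProfile hε.le (pow_pos (norm_pos_iff.mpr hx) 2)).comp x
      (contDiff_norm_sq ℝ).contDiffAt).contDiffWithinAt
  · rw [hU_eq, neg_lap_bubbleProfile_comp_norm_sq hp hε.le hK hKp hx, show 2 + a - 2 = a by ring,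
      show 2 * (2 + a) + 1 = 5 + 2 * a by ring]
end

section
/- Let $\gamma>\xi>-2$ and set $\theta:=\frac{6+2\xi}{6+2\gamma}$. Then for every radial $u\in C_c^\infty(B)$, $\left(\int_B|x|^{\gamma}|u|^{6+2\gamma}\,dx\right)^{\frac{1}{6+2\gamma}} \;\le\; (4\pi)^{\frac{\theta-1}{2}}\left(\int_B|\nabla u|^2\,dx\right)^{\frac{1-\theta}{2}}\left(\int_B|x|^{\xi}|u|^{6+2\xi}\,dx\right)^{\frac{\theta}{6+2\xi}}.$ -/
open MeasureTheory Real

/-!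
Write `u x = g ‖x‖`. Since `(s g²)' = g² + 2 s g g' ≥ -s² g'²` and `g 1 = 0`, the profile obeys the
Strauss-type bound `r g(r)² ≤ ∫₀¹ s² g'(s)² ds = (4π)⁻¹ ∫_B |∇u|²` for `0 < r < 1`. Splitting
`r^γ |g|^(6+2γ) = (r g²)^(γ-ξ) · r^ξ |g|^(6+2ξ)` and integrating in polar coordinates gives
`∫_B |x|^γ |u|^(6+2γ) ≤ (4π)^(ξ-γ) (∫_B |∇u|²)^(γ-ξ) ∫_B |x|^ξ |u|^(6+2ξ)`; taking
`1/(6+2γ)`-th powers gives the claim, as `(γ-ξ)/(6+2γ) = (1-θ)/2`.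
-/

open Set Metric

theorem integral_ball_fin_three_fun_norm (f : ℝ → ℝ) (R : ℝ) :
    ∫ x in ball (0 : E3) R, f ‖x‖ = 4 * π * ∫ r in Ioo 0 R, r ^ 2 * f r := by
  have hind : (ball (0 : E3) R).indicator (fun x => f ‖x‖)
      = fun x => (Iio R).indicator f ‖x‖ := by
    ext x
    simp only [indicator, mem_ball_zero_iff, mem_Iio]
  rw [← integral_indicator measurableSet_ball, hind,
    integral_fun_norm_addHaar volume ((Iio R).indicator f), finrank_euclideanSpace_fin,
    measureReal_def, EuclideanSpace.volume_ball_fin_three]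
  have hsmul (y : ℝ) :
      y ^ (3 - 1) • (Iio R).indicator f y = (Iio R).indicator (fun r => r ^ 2 * f r) y := by
    simp [indicator]
  simp_rw [hsmul]
  rw [setIntegral_indicator measurableSet_Iio, Ioi_inter_Iio]
  simp only [ENNReal.ofReal_one, one_pow, one_mul,
    ENNReal.toReal_ofReal (by positivity : (0 : ℝ) ≤ π * 4 / 3), nsmul_eq_mul, smul_eq_mul]
  ring

theorem norm_fderiv_comp_norm_s9 {E : Type*} [NormedAddCommGroup E] [NormedSpace ℝ E] [Nontrivial E]
    {g : ℝ → ℝ} {x : E} (hg : DifferentiableAt ℝ g ‖x‖) (hn : DifferentiableAt ℝ (‖·‖) x) :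
    ‖fderiv ℝ (fun y => g ‖y‖) x‖ = |deriv g ‖x‖| := by
  rw [show (fun y : E => g ‖y‖) = g ∘ (‖·‖) from rfl,
    (hg.hasDerivAt.comp_hasFDerivAt x hn.hasFDerivAt).fderiv, norm_smul, norm_fderiv_norm hn,
    mul_one, Real.norm_eq_abs]

theorem mul_sq_le_intervalIntegral_mul_deriv_sq {g : ℝ → ℝ} (hg : ContDiff ℝ 1 g) {r R : ℝ}
    (hR : g R = 0) (hrR : r ≤ R) :
    r * g r ^ 2 ≤ ∫ s in r..R, s ^ 2 * deriv g s ^ 2 := by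
  have hdiff : Differentiable ℝ g := hg.differentiable one_ne_zero
  have hcont : Continuous (deriv g) := hg.continuous_deriv le_rfl
  have hderiv (s : ℝ) :
      HasDerivAt (fun s => s * g s ^ 2) (g s ^ 2 + 2 * s * g s * deriv g s) s := by
    refine ((hasDerivAt_id' s).fun_mul ((hdiff s).hasDerivAt.fun_pow 2)).congr_deriv ?_
    push_cast; ring
  have hftc := intervalIntegral.integral_eq_sub_of_hasDerivAt (fun s _ => hderiv s)
    ((by fun_prop : Continuous fun s => g s ^ 2 + 2 * s * g s * deriv g s).intervalIntegrable r R)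
  calc r * g r ^ 2 = ∫ s in r..R, -(g s ^ 2 + 2 * s * g s * deriv g s) := by
        rw [intervalIntegral.integral_neg, hftc, hR]; ring
    _ ≤ ∫ s in r..R, s ^ 2 * deriv g s ^ 2 := by
        refine intervalIntegral.integral_mono_on hrR ?_ ?_ fun s _ => ?_
        · exact (by fun_prop : Continuous fun s => -(g s ^ 2 + 2 * s * g s * deriv g s))
            |>.intervalIntegrable r R
        · exact (by fun_prop : Continuous fun s => s ^ 2 * deriv g s ^ 2).intervalIntegrable r R
        · nlinarith [sq_nonneg (g s + s * deriv g s)]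

theorem mul_sq_le_integral_Ioo_mul_deriv_sq {g : ℝ → ℝ} (hg : ContDiff ℝ 1 g) (hg1 : g 1 = 0)
    {r : ℝ} (hr0 : 0 ≤ r) (hr1 : r ≤ 1) :
    r * g r ^ 2 ≤ ∫ s in Ioo 0 1, s ^ 2 * deriv g s ^ 2 := by
  have hcont : Continuous fun s => s ^ 2 * deriv g s ^ 2 := by
    have := hg.continuous_deriv le_rfl
    fun_prop
  calc r * g r ^ 2 ≤ ∫ s in r..1, s ^ 2 * deriv g s ^ 2 :=
        mul_sq_le_intervalIntegral_mul_deriv_sq hg hg1 hr1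
    _ = ∫ s in Ioo r 1, s ^ 2 * deriv g s ^ 2 := by
        rw [intervalIntegral.integral_of_le hr1, integral_Ioc_eq_integral_Ioo]
    _ ≤ ∫ s in Ioo 0 1, s ^ 2 * deriv g s ^ 2 :=
        setIntegral_mono_set (hcont.integrableOn_Icc.mono_set Ioo_subset_Icc_self)
          (.of_forall fun s => by positivity) (Ioo_subset_Ioo_left hr0).eventuallyLE

theorem integrableOn_Ioo_sq_mul_rpow_mul_abs_rpow {g : ℝ → ℝ} (hg : Continuous g) {ξ : ℝ}
    (hξ : -2 ≤ ξ) :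
    IntegrableOn (fun r => r ^ 2 * (r ^ ξ * |g r| ^ (6 + 2 * ξ))) (Ioo 0 1) := by
  obtain ⟨M, hM⟩ :=
    (isCompact_Icc (a := (0 : ℝ)) (b := 1)).exists_bound_of_continuousOn hg.continuousOn
  refine Measure.integrableOn_of_bounded (M := M ^ (6 + 2 * ξ)) (by simp)
    (by have := hg.measurable; fun_prop) ?_
  filter_upwards [ae_restrict_mem measurableSet_Ioo] with r hr
  have hweight : r ^ 2 * r ^ ξ ≤ 1 := by
    rw [← rpow_natCast, ← rpow_add hr.1]
    exact rpow_le_one hr.1.le hr.2.le (by push_cast; linarith)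
  have hbound : |g r| ^ (6 + 2 * ξ) ≤ M ^ (6 + 2 * ξ) :=
    rpow_le_rpow (abs_nonneg _) (hM r (Ioo_subset_Icc_self hr)) (by linarith)
  rw [norm_of_nonneg (by have := hr.1; positivity)]
  calc r ^ 2 * (r ^ ξ * |g r| ^ (6 + 2 * ξ))
      = (r ^ 2 * r ^ ξ) * |g r| ^ (6 + 2 * ξ) := by ring
    _ ≤ 1 * M ^ (6 + 2 * ξ) := by gcongr
    _ = M ^ (6 + 2 * ξ) := one_mul _

theorem sq_mul_rpow_mul_abs_rpow_eq {y t γ ξ : ℝ} (hy : 0 < y) (hγ : 6 + 2 * γ ≠ 0) :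
    y ^ 2 * (y ^ γ * |t| ^ (6 + 2 * γ))
      = (y * t ^ 2) ^ (γ - ξ) * (y ^ 2 * (y ^ ξ * |t| ^ (6 + 2 * ξ))) := by
  have ht : (y * t ^ 2) ^ (γ - ξ) = y ^ (γ - ξ) * |t| ^ (2 * (γ - ξ)) := by
    rw [← sq_abs t, mul_rpow hy.le (by positivity), ← rpow_natCast, ← rpow_mul (abs_nonneg t)]
    norm_num
  have hy' : y ^ γ = y ^ (γ - ξ) * y ^ ξ := by rw [← rpow_add hy, sub_add_cancel]
  have ht' : |t| ^ (6 + 2 * γ) = |t| ^ (2 * (γ - ξ)) * |t| ^ (6 + 2 * ξ) := by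
    rw [← rpow_add' (abs_nonneg t) (by convert hγ using 1; ring)]
    congr 1; ring
  rw [ht, hy', ht']; ring

theorem integral_Ioo_sq_mul_rpow_mul_abs_rpow_le {g : ℝ → ℝ} (hg : ContDiff ℝ 1 g)
    (hg1 : g 1 = 0) {γ ξ : ℝ} (hξ : -2 ≤ ξ) (hξγ : ξ ≤ γ) :
    ∫ r in Ioo 0 1, r ^ 2 * (r ^ γ * |g r| ^ (6 + 2 * γ))
      ≤ (∫ s in Ioo 0 1, s ^ 2 * deriv g s ^ 2) ^ (γ - ξ)
        * ∫ r in Ioo 0 1, r ^ 2 * (r ^ ξ * |g r| ^ (6 + 2 * ξ)) := by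
  rw [← integral_const_mul]
  refine integral_mono_of_nonneg ?_
    ((integrableOn_Ioo_sq_mul_rpow_mul_abs_rpow hg.continuous hξ).const_mul _) ?_
  · filter_upwards [ae_restrict_mem measurableSet_Ioo] with r hr
    have := hr.1
    positivity
  · filter_upwards [ae_restrict_mem measurableSet_Ioo] with r hr
    have := hr.1
    rw [sq_mul_rpow_mul_abs_rpow_eq (ξ := ξ) hr.1 (by linarith)]
    gcongr
    exact mul_sq_le_integral_Ioo_mul_deriv_sq hg hg1 hr.1.le hr.2.le

theorem rpow_interpolation_of_le {P A I B γ ξ θ : ℝ} (hP : 0 < P) (hA : 0 ≤ A) (hI : 0 ≤ I)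
    (hB : 0 ≤ B) (hγ : 0 < 6 + 2 * γ) (hξ : 0 < 6 + 2 * ξ) (hθ : θ = (6 + 2 * ξ) / (6 + 2 * γ))
    (hAIB : A ≤ I ^ (γ - ξ) * B) :
    (P * A) ^ (1 / (6 + 2 * γ))
      ≤ P ^ ((θ - 1) / 2) * (P * I) ^ ((1 - θ) / 2) * (P * B) ^ (θ / (6 + 2 * ξ)) := by
  have hθB : θ / (6 + 2 * ξ) = 1 / (6 + 2 * γ) := by rw [hθ]; field_simp
  have hθI : (1 - θ) / 2 = (γ - ξ) / (6 + 2 * γ) := by rw [hθ]; field_simp; ring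
  calc (P * A) ^ (1 / (6 + 2 * γ)) ≤ (P * (I ^ (γ - ξ) * B)) ^ (1 / (6 + 2 * γ)) := by gcongr
    _ = P ^ (1 / (6 + 2 * γ)) * I ^ ((γ - ξ) / (6 + 2 * γ)) * B ^ (1 / (6 + 2 * γ)) := by
        rw [mul_rpow hP.le (by positivity), mul_rpow (by positivity) hB, ← rpow_mul hI]
        ring_nf
    _ = (P ^ ((θ - 1) / 2) * P ^ ((1 - θ) / 2))
          * P ^ (1 / (6 + 2 * γ)) * I ^ ((γ - ξ) / (6 + 2 * γ)) * B ^ (1 / (6 + 2 * γ)) := by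
        rw [← rpow_add hP, show (θ - 1) / 2 + (1 - θ) / 2 = 0 by ring, rpow_zero, one_mul]
    _ = P ^ ((θ - 1) / 2) * (P * I) ^ ((1 - θ) / 2) * (P * B) ^ (θ / (6 + 2 * ξ)) := by
        rw [mul_rpow hP.le hI, mul_rpow hP.le hB, hθB, hθI]
        ring

theorem stmt9_general (γ ξ : ℝ) (hξ : -2 < ξ) (hγξ : ξ < γ)
    (θ : ℝ) (hθ : θ = (6 + 2 * ξ) / (6 + 2 * γ))
    (u : E3 → ℝ) (hs : ContDiff ℝ (⊤ : ℕ∞) u)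
    (hsub : tsupport u ⊆ Metric.ball (0 : E3) 1)
    (hrad : ∀ x y : E3, ‖x‖ = ‖y‖ → u x = u y) :
    (∫ x in Metric.ball (0 : E3) 1, ‖x‖ ^ γ * |u x| ^ (6 + 2 * γ)) ^ (1 / (6 + 2 * γ))
      ≤ (4 * Real.pi) ^ ((θ - 1) / 2)
        * (∫ x in Metric.ball (0 : E3) 1, ‖fderiv ℝ u x‖ ^ 2) ^ ((1 - θ) / 2)
        * (∫ x in Metric.ball (0 : E3) 1, ‖x‖ ^ ξ * |u x| ^ (6 + 2 * ξ)) ^ (θ / (6 + 2 * ξ)) := by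
  set v : E3 := EuclideanSpace.single 0 1
  set g : ℝ → ℝ := fun t => u (t • v)
  have hv : ‖v‖ = 1 := by simp [v]
  have hprofile (x : E3) : u x = g ‖x‖ := hrad _ _ (by simp [norm_smul, hv])
  have hg : ContDiff ℝ 1 g := (hs.comp (contDiff_id.smul contDiff_const)).of_le (by simp)
  have hg1 : g 1 = 0 :=
    image_eq_zero_of_notMem_tsupport (f := u) fun h => by simpa [hv] using hsub h
  have hgrad : ∫ x in ball (0 : E3) 1, ‖fderiv ℝ u x‖ ^ 2
      = 4 * π * ∫ s in Ioo 0 1, s ^ 2 * deriv g s ^ 2 := by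
    rw [← integral_ball_fin_three_fun_norm]
    refine setIntegral_congr_ae measurableSet_ball ?_
    filter_upwards [compl_mem_ae_iff.2 (measure_singleton (0 : E3))] with x hx _
    rw [funext hprofile, norm_fderiv_comp_norm_s9 (hg.differentiable one_ne_zero _)
      ((contDiffAt_norm ℝ hx).differentiableAt one_ne_zero), sq_abs]
  have hweighted (c : ℝ) : ∫ x in ball (0 : E3) 1, ‖x‖ ^ c * |u x| ^ (6 + 2 * c)
      = 4 * π * ∫ r in Ioo 0 1, r ^ 2 * (r ^ c * |g r| ^ (6 + 2 * c)) := by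
    simp_rw [hprofile]
    exact integral_ball_fin_three_fun_norm (fun r => r ^ c * |g r| ^ (6 + 2 * c)) 1
  have hnonneg {F : ℝ → ℝ} (hF : ∀ r ∈ Ioo (0 : ℝ) 1, 0 ≤ F r) : 0 ≤ ∫ r in Ioo 0 1, F r :=
    setIntegral_nonneg measurableSet_Ioo hF
  rw [hweighted, hweighted, hgrad]
  exact rpow_interpolation_of_le (by positivity)
    (hnonneg fun r hr => by have := hr.1; positivity) (hnonneg fun r _ => by positivity)
    (hnonneg fun r hr => by have := hr.1; positivity) (by linarith) (by linarith) hθ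
    (integral_Ioo_sq_mul_rpow_mul_abs_rpow_le hg hg1 hξ.le hγξ.le)

/-- Interpolation between weighted critical norms: for `γ > ξ > -2` and
`θ = (6+2ξ)/(6+2γ)`,
`‖u‖_{L^{6+2γ}(B;|x|^γ)} ≤ (4π)^{(θ-1)/2} ‖∇u‖₂^{1-θ} ‖u‖_{L^{6+2ξ}(B;|x|^ξ)}^θ`. -/
theorem stmt9 (γ ξ : ℝ) (hξ : -2 < ξ) (hγξ : ξ < γ)
    (θ : ℝ) (hθ : θ = (6 + 2 * ξ) / (6 + 2 * γ))
    (u : E3 → ℝ) (hs : ContDiff ℝ (⊤ : ℕ∞) u) (hc : HasCompactSupport u)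
    (hsub : tsupport u ⊆ Metric.ball (0 : E3) 1)
    (hrad : ∀ x y : E3, ‖x‖ = ‖y‖ → u x = u y) :
    (∫ x in Metric.ball (0 : E3) 1, ‖x‖ ^ γ * |u x| ^ (6 + 2 * γ)) ^ (1 / (6 + 2 * γ))
      ≤ (4 * Real.pi) ^ ((θ - 1) / 2)
        * (∫ x in Metric.ball (0 : E3) 1, ‖fderiv ℝ u x‖ ^ 2) ^ ((1 - θ) / 2)
        * (∫ x in Metric.ball (0 : E3) 1, ‖x‖ ^ ξ * |u x| ^ (6 + 2 * ξ)) ^ (θ / (6 + 2 * ξ)) :=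
  stmt9_general γ ξ hξ hγξ θ hθ u hs hsub hrad
end

section
/- Let $a>0$, $b>0$, $c\ge0$, $S>0$ and $\alpha>-1$. Then there exists a unique $\nu>0$ such that $a\nu^2+b\nu^4+bc\nu^2 \;=\; S^{-(3+\alpha)}\,\nu^{6+2\alpha},$ and this $\nu$ satisfies both $\nu>\left(aS^{3+\alpha}\right)^{\frac{1}{4+2\alpha}}$ and $\nu>\left(bS^{3+\alpha}\right)^{\frac{1}{2+2\alpha}}$. -/
open Real

/-- For `a > 0` there is a unique `ν > 0` with `aν² + bν⁴ + bcν² = S^{-(3+α)} ν^{6+2α}`, and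
it satisfies `ν > (a S^{3+α})^{1/(4+2α)}` and `ν > (b S^{3+α})^{1/(2+2α)}`. -/
theorem stmt18 (a b c S α : ℝ) (ha : 0 < a) (hb : 0 < b) (hc : 0 ≤ c) (hS : 0 < S)
    (hα : -1 < α) :
    ∃ ν : ℝ, 0 < ν ∧
      a * ν ^ 2 + b * ν ^ 4 + b * c * ν ^ 2 = S ^ (-(3 + α)) * ν ^ (6 + 2 * α) ∧
      (∀ ν' : ℝ, 0 < ν' →
        a * ν' ^ 2 + b * ν' ^ 4 + b * c * ν' ^ 2 = S ^ (-(3 + α)) * ν' ^ (6 + 2 * α) →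
        ν' = ν) ∧
      (a * S ^ (3 + α)) ^ (1 / (4 + 2 * α)) < ν ∧
      (b * S ^ (3 + α)) ^ (1 / (2 + 2 * α)) < ν := by
  set K : ℝ := S ^ (-(3 + α)) with hKdef
  have hK : (0:ℝ) < K := Real.rpow_pos_of_pos hS _
  have hq : (0:ℝ) < 2 + 2 * α := by linarith
  have habc : (0:ℝ) < a + b * c := by positivity
  set ψ : ℝ → ℝ := fun ν => K * ν ^ (2 + 2 * α) - (a + b * c) / ν ^ 2 - b with hψ
  have key : ∀ ν : ℝ, 0 < ν →
      ψ ν * ν ^ 4 = K * ν ^ (6 + 2 * α) - (a * ν ^ 2 + b * ν ^ 4 + b * c * ν ^ 2) := by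
    intro ν hν
    have h6 : ν ^ ((6:ℝ) + 2 * α) = ν ^ ((2:ℝ) + 2 * α) * ν ^ (4:ℕ) := by
      rw [← Real.rpow_natCast ν 4, ← Real.rpow_add hν]
      norm_num
      congr 1
      ring
    simp only [hψ]
    rw [h6]
    have hν2 : (ν:ℝ) ^ 2 ≠ 0 := pow_ne_zero 2 (ne_of_gt hν)
    field_simp
    ring
  -- strict monotonicity
  have hmono : StrictMonoOn ψ (Set.Ioi 0) := by
    intro x hx y hy hxy
    simp only [hψ]
    have h1 : x ^ (2 + 2 * α) < y ^ (2 + 2 * α) :=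
      Real.rpow_lt_rpow (le_of_lt hx) hxy hq
    have hx2 : x ^ 2 < y ^ 2 := by
      apply pow_lt_pow_left₀ hxy (le_of_lt hx)
      norm_num
    have h2 : (a + b * c) / y ^ 2 < (a + b * c) / x ^ 2 :=
      div_lt_div_of_pos_left habc (pow_pos hx 2) hx2
    have h3 : K * x ^ (2 + 2 * α) < K * y ^ (2 + 2 * α) :=
      mul_lt_mul_of_pos_left h1 hK
    linarith
  -- continuity
  have hcont : ContinuousOn ψ (Set.Ioi 0) := by
    apply ContinuousOn.sub
    apply ContinuousOn.sub
    · exact continuousOn_const.mul (fun x hx =>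
        (Real.continuousAt_rpow_const x _ (Or.inl (ne_of_gt hx))).continuousWithinAt)
    · exact ContinuousOn.div continuousOn_const (continuous_pow 2).continuousOn
        (fun x hx => pow_ne_zero 2 (ne_of_gt hx))
    · exact continuousOn_const
  -- big endpoint
  obtain ⟨ν1, hν1big, hν1ge⟩ : ∃ ν1 : ℝ, (a + b * c + b) / K < ν1 ^ (2 + 2 * α) ∧ 1 ≤ ν1 := by
    have h := (tendsto_rpow_atTop hq).eventually_gt_atTop ((a + b * c + b) / K)
    exact (h.and (Filter.eventually_ge_atTop 1)).exists
  have hν1pos : (0:ℝ) < ν1 := lt_of_lt_of_le one_pos hν1ge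
  have hψν1 : 0 < ψ ν1 := by
    simp only [hψ]
    have h1 : a + b * c + b < K * ν1 ^ (2 + 2 * α) := by
      rw [mul_comm K _]; exact (div_lt_iff₀ hK).mp hν1big
    have h2 : (a + b * c) / ν1 ^ 2 ≤ a + b * c := by
      apply div_le_self habc.le
      nlinarith
    linarith
  -- small endpoint
  set ν0 : ℝ := min 1 (Real.sqrt (a / K)) / 2 with hν0def
  have hsq : (0:ℝ) < Real.sqrt (a / K) := Real.sqrt_pos.mpr (by positivity)
  have hν0pos : 0 < ν0 := by
    simp only [hν0def]
    have := lt_min one_pos hsq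
    positivity
  have hν0lt1 : ν0 < 1 := by
    have : min 1 (Real.sqrt (a / K)) ≤ 1 := min_le_left _ _
    simp only [hν0def]; linarith
  have hν0sq : ν0 ^ 2 < a / K := by
    have h1 : ν0 < Real.sqrt (a / K) := by
      have : min 1 (Real.sqrt (a / K)) ≤ Real.sqrt (a / K) := min_le_right _ _
      simp only [hν0def]; linarith
    calc ν0 ^ 2 < Real.sqrt (a / K) ^ 2 := by
          apply pow_lt_pow_left₀ h1 hν0pos.le; norm_num
      _ = a / K := Real.sq_sqrt (by positivity)
  have hψν0 : ψ ν0 < 0 := by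
    simp only [hψ]
    have h1 : ν0 ^ (2 + 2 * α) ≤ 1 := Real.rpow_le_one hν0pos.le hν0lt1.le hq.le
    have h2 : K * ν0 ^ (2 + 2 * α) ≤ K := by nlinarith
    have h3 : K < a / ν0 ^ 2 := by
      rw [lt_div_iff₀ (pow_pos hν0pos 2)]
      have := (lt_div_iff₀ hK).mp hν0sq
      linarith
    have h4 : a / ν0 ^ 2 ≤ (a + b * c) / ν0 ^ 2 := by
      gcongr
      nlinarith
    linarith
  -- IVT
  have hle : ν0 ≤ ν1 := le_trans hν0lt1.le hν1ge
  have hsub : Set.Icc ν0 ν1 ⊆ Set.Ioi 0 := fun x hx => lt_of_lt_of_le hν0pos hx.1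
  have hivt := intermediate_value_Icc hle (hcont.mono hsub)
  have h0mem : (0:ℝ) ∈ Set.Icc (ψ ν0) (ψ ν1) := ⟨hψν0.le, hψν1.le⟩
  obtain ⟨ν, hνmem, hψν⟩ := hivt h0mem
  have hνpos : 0 < ν := lt_of_lt_of_le hν0pos hνmem.1
  have hνIoi : ν ∈ Set.Ioi (0:ℝ) := hνpos
  -- equation at ν
  have heq : a * ν ^ 2 + b * ν ^ 4 + b * c * ν ^ 2 = K * ν ^ (6 + 2 * α) := by
    have := key ν hνpos
    rw [hψν] at this
    linarith [this]
  refine ⟨ν, hνpos, heq, ?_, ?_, ?_⟩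
  · intro ν' hν' heq'
    have h0 : ψ ν' * ν' ^ 4 = 0 := by rw [key ν' hν', heq']; ring
    have hψν' : ψ ν' = 0 := by
      have h4 : (ν':ℝ) ^ 4 ≠ 0 := pow_ne_zero 4 (ne_of_gt hν')
      exact (mul_eq_zero.mp h0).resolve_right h4
    exact hmono.injOn hν' hνIoi (hψν'.trans hψν.symm)
  · -- first inequality
    have hmain : K * ν ^ (2 + 2 * α) = (a + b * c) / ν ^ 2 + b := by
      simp only [hψ] at hψν; linarith
    have hKinv : K⁻¹ = S ^ (3 + α) := by
      rw [hKdef, ← Real.rpow_neg_one, ← Real.rpow_mul hS.le]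
      ring_nf
    have h42 : ν ^ ((4:ℝ) + 2 * α) = ν ^ ((2:ℝ) + 2 * α) * ν ^ (2:ℕ) := by
      rw [← Real.rpow_natCast ν 2, ← Real.rpow_add hνpos]
      norm_num
      congr 1
      ring
    have h5 : K * ν ^ ((4:ℝ) + 2 * α) = (a + b * c) + b * ν ^ 2 := by
      rw [h42, ← mul_assoc, hmain]
      field_simp
    have hgt : a * S ^ (3 + α) < ν ^ ((4:ℝ) + 2 * α) := by
      have h6 : a < K * ν ^ ((4:ℝ) + 2 * α) := by nlinarith [pow_pos hνpos 2, mul_pos hb (pow_pos hνpos 2)]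
      rw [mul_comm] at h6
      have h7 : a / K < ν ^ ((4:ℝ) + 2 * α) := (div_lt_iff₀ hK).mpr h6
      rwa [div_eq_mul_inv, hKinv] at h7
    have hp : (0:ℝ) < 4 + 2 * α := by linarith
    calc (a * S ^ (3 + α)) ^ (1 / (4 + 2 * α))
        < (ν ^ ((4:ℝ) + 2 * α)) ^ (1 / (4 + 2 * α)) := by
          apply Real.rpow_lt_rpow (by positivity) hgt (by positivity)
      _ = ν := by
          rw [← Real.rpow_mul hνpos.le, mul_one_div, div_self hp.ne', Real.rpow_one]
  · -- second inequality
    have hmain : K * ν ^ (2 + 2 * α) = (a + b * c) / ν ^ 2 + b := by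
      simp only [hψ] at hψν; linarith
    have hKinv : K⁻¹ = S ^ (3 + α) := by
      rw [hKdef, ← Real.rpow_neg_one, ← Real.rpow_mul hS.le]
      ring_nf
    have hgt : b * S ^ (3 + α) < ν ^ ((2:ℝ) + 2 * α) := by
      have hdiv : 0 < (a + b * c) / ν ^ 2 := div_pos habc (pow_pos hνpos 2)
      have h6 : b < K * ν ^ ((2:ℝ) + 2 * α) := by linarith
      have h6' : b < ν ^ ((2:ℝ) + 2 * α) * K := by rw [mul_comm] at h6; exact h6
      have h7 : b / K < ν ^ ((2:ℝ) + 2 * α) := (div_lt_iff₀ hK).mpr h6'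
      rwa [div_eq_mul_inv, hKinv] at h7
    calc (b * S ^ (3 + α)) ^ (1 / (2 + 2 * α))
        < (ν ^ ((2:ℝ) + 2 * α)) ^ (1 / (2 + 2 * α)) := by
          apply Real.rpow_lt_rpow (by positivity) hgt (by positivity)
      _ = ν := by
          rw [← Real.rpow_mul hνpos.le, mul_one_div, div_self hq.ne', Real.rpow_one]
end
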